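/- Define ζ : [0, ∞) → ℝ by ζ(t) = 2(√t − 1) for 0 ≤ t ≤ 1 and ζ(t) = 2·log((t+1)/2) for t > 1. Let 𝒴 be a finite nonempty alphabet, n a positive integer, 𝐩 a process distribution on 𝒴^n with p_t(y∣𝐰) > 0 for all t ∈ {1, …, n}, all y ∈ 𝒴 and all 𝐰 ∈ 𝒴^n, let 𝒬 be a nonempty class of process distributions on 𝒴^n, and let 𝒱 be a finite sequential square-root cover of 𝒬 at some scale α > 0. Then for every 𝐪 ∈ 𝒬, every 𝐯′ ∈ 𝒱, and all 𝐰, 𝐲 ∈ 𝒴^n, there exists 𝐯 ∈ 𝒱 ∪ {𝐩} such that both Σ_(t=1)^n (ζ(q_t(y_t∣𝐰)/p_t(y_t∣𝐰)) − ζ(v_t(y_t∣𝐰)/p_t(y_t∣𝐰)))² ≤ Σ_(t=1)^n (ζ(q_t(y_t∣𝐰)/p_t(y_t∣𝐰)) − ζ(v′_t(y_t∣𝐰)/p_t(y_t∣𝐰)))² and Σ_(t=1)^n ζ(q_t(y_t∣𝐰)/p_t(y_t∣𝐰))² ≥ (1/4)·Σ_(t=1)^n ζ(v_t(y_t∣𝐰)/p_t(y_t∣𝐰))².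 -/
import Mathlib


open scoped ENNReal BigOperators

/-- A process distribution on 𝒴^n: a tuple of conditional probability mass functions
q_t(·∣w), each depending only on the prefix w_1, …, w_{t−1} of w. -/
structure ProcessDist (Y : Type*) [Fintype Y] (n : ℕ) where
  cond : Fin n → (Fin n → Y) → Y → ℝ
  nonneg : ∀ t w y, 0 ≤ cond t w y
  sum_one : ∀ t w, ∑ y, cond t w y = 1
  prefix_dep : ∀ t (w w' : Fin n → Y), (∀ i : Fin n, i < t → w i = w' i) →
    ∀ y, cond t w y = cond t w' y

/-- The induced joint probability 𝐪(𝐲) = Π_t q_t(y_t ∣ y_1, …, y_{t−1}). -/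
noncomputable def ProcessDist.joint {Y : Type*} [Fintype Y] {n : ℕ}
    (q : ProcessDist Y n) (y : Fin n → Y) : ℝ :=
  ∏ t, q.cond t y (y t)

/-- `V` is a sequential square-root cover of the class `Q` at scale `α`: for every 𝐪 ∈ 𝒬 and
every 𝐰 ∈ 𝒴^n there is 𝐯 ∈ 𝒱 with |√(q_t(y∣𝐰)) − √(v_t(y∣𝐰))| ≤ α for all t, y. -/
def IsSeqSqCover {Y : Type*} [Fintype Y] {n : ℕ} (Q : Set (ProcessDist Y n)) (α : ℝ)
    (V : Finset (ProcessDist Y n)) : Prop :=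
  ∀ q ∈ Q, ∀ w : Fin n → Y, ∃ v ∈ V, ∀ t : Fin n, ∀ y : Y,
    |Real.sqrt (q.cond t w y) - Real.sqrt (v.cond t w y)| ≤ α

/-- Sequential square-root entropy ℋ_sq(𝒬, α, n) ∈ [0,∞]: the log of the minimal cardinality
of a sequential square-root cover of 𝒬 at scale α (+∞ if no finite cover exists). -/
noncomputable def HsqProc {Y : Type*} [Fintype Y] {n : ℕ} (Q : Set (ProcessDist Y n))
    (α : ℝ) : ℝ≥0∞ :=
  ⨅ (V : Finset (ProcessDist Y n)) (_ : IsSeqSqCover Q α V), ENNReal.ofReal (Real.log V.card)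

/-- The minimax regret ℛ_n(𝒬) = log Σ_𝐲 sup_{𝐪∈𝒬} 𝐪(𝐲) (logarithm of the Shtarkov sum). -/
noncomputable def shtarkovRegret {Y : Type*} [Fintype Y] {n : ℕ}
    (Q : Set (ProcessDist Y n)) : ℝ :=
  Real.log (∑ y : Fin n → Y, ⨆ q : Q, (q : ProcessDist Y n).joint y)

/-- The function ζ from the paper: ζ(t) = 2(√t − 1) for t ≤ 1, ζ(t) = 2 log((t+1)/2) for t > 1. -/
noncomputable def zeta (t : ℝ) : ℝ :=
  if t ≤ 1 then 2 * (Real.sqrt t - 1) else 2 * Real.log ((t + 1) / 2)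

/-- let 𝐩 be a process distribution with everywhere positive conditionals, 𝒬 a
nonempty class of process distributions, and 𝒱 a finite sequential square-root cover of 𝒬 at
some scale α > 0.  Then for every 𝐪 ∈ 𝒬, 𝐯′ ∈ 𝒱 and 𝐰, 𝐲 ∈ 𝒴^n there exists
𝐯 ∈ 𝒱 ∪ {𝐩} with
Σ_t (ζ(q_t(y_t∣𝐰)/p_t(y_t∣𝐰)) − ζ(v_t(y_t∣𝐰)/p_t(y_t∣𝐰)))²
  ≤ Σ_t (ζ(q_t(y_t∣𝐰)/p_t(y_t∣𝐰)) − ζ(v′_t(y_t∣𝐰)/p_t(y_t∣𝐰)))²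
and Σ_t ζ(q_t(y_t∣𝐰)/p_t(y_t∣𝐰))² ≥ (1/4)·Σ_t ζ(v_t(y_t∣𝐰)/p_t(y_t∣𝐰))². -/
theorem stmt16 {Y : Type*} [Fintype Y] [Nonempty Y] {n : ℕ} (hn : 0 < n)
    (P : ProcessDist Y n) (hP : ∀ t w y, 0 < P.cond t w y)
    (Q : Set (ProcessDist Y n)) (hQ : Q.Nonempty)
    (α : ℝ) (hα : 0 < α) (V : Finset (ProcessDist Y n)) (hV : IsSeqSqCover Q α V) :
    ∀ q ∈ Q, ∀ v' ∈ V, ∀ w y : Fin n → Y,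
      ∃ v : ProcessDist Y n, (v ∈ V ∨ v = P) ∧
        (∑ t,
            (zeta (q.cond t w (y t) / P.cond t w (y t)) -
              zeta (v.cond t w (y t) / P.cond t w (y t))) ^ 2 ≤
          ∑ t,
            (zeta (q.cond t w (y t) / P.cond t w (y t)) -
              zeta (v'.cond t w (y t) / P.cond t w (y t))) ^ 2) ∧
        ((1 / 4 : ℝ) * ∑ t, (zeta (v.cond t w (y t) / P.cond t w (y t))) ^ 2 ≤
          ∑ t, (zeta (q.cond t w (y t) / P.cond t w (y t))) ^ 2) := by
  intro q hq v' hv' w y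
  set A : Fin n → ℝ := fun t => zeta (q.cond t w (y t) / P.cond t w (y t)) with hA
  set B : Fin n → ℝ := fun t => zeta (v'.cond t w (y t) / P.cond t w (y t)) with hB
  by_cases hc : ∑ t, (A t) ^ 2 ≤ ∑ t, (A t - B t) ^ 2
  · refine ⟨P, Or.inr rfl, ?_, ?_⟩
    · have hz : ∀ t : Fin n, zeta (P.cond t w (y t) / P.cond t w (y t)) = 0 := by
        intro t
        rw [div_self (hP t w (y t)).ne']
        simp [zeta]
      simpa [hz] using hc
    · have hz : ∀ t : Fin n, zeta (P.cond t w (y t) / P.cond t w (y t)) = 0 := by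
        intro t
        rw [div_self (hP t w (y t)).ne']
        simp [zeta]
      have : (0:ℝ) ≤ ∑ t, (A t) ^ 2 := Finset.sum_nonneg fun t _ => sq_nonneg _
      simpa [hz] using this
  · push_neg at hc
    refine ⟨v', Or.inl hv', le_refl _, ?_⟩
    have hcs := Finset.sum_mul_sq_le_sq_mul_sq Finset.univ A B
    have hexp : ∑ t, (A t - B t) ^ 2
        = ∑ t, (A t) ^ 2 - 2 * ∑ t, A t * B t + ∑ t, (B t) ^ 2 := by
      rw [Finset.mul_sum, ← Finset.sum_sub_distrib, ← Finset.sum_add_distrib]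
      exact Finset.sum_congr rfl fun t _ => by ring
    have hBnn : (0:ℝ) ≤ ∑ t, (B t) ^ 2 := Finset.sum_nonneg fun t _ => sq_nonneg _
    have hAnn : (0:ℝ) ≤ ∑ t, (A t) ^ 2 := Finset.sum_nonneg fun t _ => sq_nonneg _
    nlinarith [hcs, sq_nonneg (∑ t, A t * B t)]
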